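/- arXiv:2410.12644 — 4 statements merged into one kernel-verified Lean document; each statement's English description precedes it below -/
import Mathlib

section
/- Let Ω ∈ 𝒟ʳ be a Radon domain with affine arc-length parametrization γ_Ω. Then there exists s̄ ∈ 𝕋 such that the 4-periodic symplectic billiard orbit passing through γ_Ω(s̄) has parameters {s̄, s̄ + 1/4, s̄ + 1/2, s̄ + 3/4}, i.e. the four points γ_Ω(s̄), γ_Ω(s̄+1/4), γ_Ω(s̄+1/2), γ_Ω(s̄+3/4) form a 4-periodic closed trajectory of the symplectic billiard. -/
/-!
The displacement `φ s - s` of the next-vertex map takes values at `s` and at `φ s` that add up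
to `1/2`, since `φ (φ s) = s + 1/2`. By the intermediate value theorem it equals `1/4`
somewhere, and the orbit through that point is the required one.
-/

noncomputable section

open Real Set MeasureTheory

/-- The Euclidean plane. -/
abbrev Plane : Type := EuclideanSpace ℝ (Fin 2)

/-- The point of the plane with coordinates `(a, b)`. -/
def pt (a b : ℝ) : Plane := (WithLp.equiv 2 (Fin 2 → ℝ)).symm ![a, b]

/-- The determinant of two planar vectors. -/
def det2 (v w : Plane) : ℝ := v 0 * w 1 - v 1 * w 0

/-- A strictly convex planar domain in `𝒟ʳ`: `C^{r+1}` boundary with everywhere positive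
curvature, counterclockwise oriented, normalized to unit affine perimeter, and described by
its affine arc-length parametrization `γ` (1-periodic, `C^r`, `det (γ', γ'') = 1`). -/
structure AffDomain (r : ℕ) where
  γ : ℝ → Plane
  periodic : Function.Periodic γ 1
  smooth : ContDiff ℝ r γ
  affine : ∀ s : ℝ, det2 (deriv γ s) (iteratedDeriv 2 γ s) = 1
  inj : Set.InjOn γ (Set.Ico (0:ℝ) 1)

/-- A closed trajectory of the symplectic billiard: a cyclic sequence of `q` boundary points
(given by parameters) such that `x_{j+1} - x_{j-1}` is parallel to the tangent at `x_j`. -/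
def IsClosedTraj (γ : ℝ → Plane) (q : ℕ) (s : ℤ → ℝ) : Prop :=
  (∀ j : ℤ, s (j + q) = s j) ∧
    ∀ j : ℤ, det2 (γ (s (j + 1)) - γ (s (j - 1))) (deriv γ (s j)) = 0

/-- The action `Σ_j det (x_j, x_{j+1})` of a cyclic configuration of `q` points. -/
def bAction (γ : ℝ → Plane) (q : ℕ) (s : ℤ → ℝ) : ℝ :=
  ∑ j ∈ Finset.range q, det2 (γ (s j)) (γ (s (j + 1)))

/-- The area of the domain. -/
def domArea {r : ℕ} (Ω : AffDomain r) : ℝ :=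
  (1 / 2) * ∫ u in (0:ℝ)..1, det2 (Ω.γ u) (deriv Ω.γ u)

/-- The area spectrum `𝒜(Ω) = ℕ·{actions of closed trajectories} ∪ ℕ·{A_Ω}`. -/
def areaSpectrum {r : ℕ} (Ω : AffDomain r) : Set ℝ :=
  {a : ℝ | ∃ n : ℕ, 0 < n ∧ ∃ q : ℕ, 2 ≤ q ∧ ∃ s : ℤ → ℝ,
      IsClosedTraj Ω.γ q s ∧ a = n * bAction Ω.γ q s} ∪
  {a : ℝ | ∃ n : ℕ, 0 < n ∧ a = n * domArea Ω}

/-- Affine arc-length parametrization of the circle of affine perimeter 1 with center `c`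
and phase `φ` (its Euclidean radius is `(2π)^{-3/2}`). -/
def circleParam (c : Plane) (φ : ℝ) : ℝ → Plane :=
  fun u => c + ((2 * π) ^ (-(3:ℝ)/2)) •
    pt (Real.cos (2 * π * u + φ)) (Real.sin (2 * π * u + φ))

/-- The distance `d(Ω₀, Ω₁) = Σ_{k=0}^{r} sup_{s ∈ [0,1]} ‖γ₁^{(k)}(s) - γ₀^{(k)}(s)‖`. -/
def domDist (r : ℕ) (γ₀ γ₁ : ℝ → Plane) : ℝ :=
  ∑ k ∈ Finset.range (r + 1),
    ⨆ u : Set.Icc (0:ℝ) 1, ‖iteratedDeriv k γ₁ (u : ℝ) - iteratedDeriv k γ₀ (u : ℝ)‖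

/-- `Ω` is `δ`-close to the circle: `d(Ω, D) ≤ δ` where `D` is the disk of affine
perimeter 1 tangent to `Ω` at `γ_Ω(0)`. -/
def CloseToCircle (r : ℕ) (δ : ℝ) (Ω : AffDomain r) : Prop :=
  ∃ c : Plane, ∃ φ : ℝ,
    circleParam c φ 0 = Ω.γ 0 ∧
    (∃ t : ℝ, 0 < t ∧ deriv (circleParam c φ) 0 = t • deriv Ω.γ 0) ∧
    domDist r Ω.γ (circleParam c φ) ≤ δ

/-- Reflection across the line through `p` with direction `v`. -/
def lineReflect (p v x : Plane) : Plane :=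
  p + ((2 * (inner ℝ (x - p) v : ℝ) / (inner ℝ v v : ℝ)) • v - (x - p))

/-- `Ω` is axially symmetric: invariant under the reflection in some line. -/
def IsAxiallySymmetric {r : ℕ} (Ω : AffDomain r) : Prop :=
  ∃ p v : Plane, v ≠ 0 ∧ lineReflect p v '' Set.range Ω.γ = Set.range Ω.γ

/-- `Ω` is centrally symmetric: invariant under the point reflection in some point. -/
def IsCentrallySymmetric {r : ℕ} (Ω : AffDomain r) : Prop :=
  ∃ c : Plane, (fun x => (2:ℝ) • c - x) '' Set.range Ω.γ = Set.range Ω.γ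

/-- A `q`-periodic symplectic billiard orbit of rotation number `1/q` (in lifted
parameters: strictly increasing, jumping by `1` after `q` steps). -/
def IsPeriodicOrbit (γ : ℝ → Plane) (q : ℕ) (s : ℤ → ℝ) : Prop :=
  StrictMono s ∧ (∀ j : ℤ, s (j + q) = s j + 1) ∧
    ∀ j : ℤ, det2 (γ (s (j + 1)) - γ (s (j - 1))) (deriv γ (s j)) = 0

/-- Even-rational integrability: for every even `q ≥ 4` there is a non-contractible
invariant curve consisting of `q`-periodic points (a continuous family of `q`-periodic
orbits through every boundary point). -/
def EvenRatIntegrable {r : ℕ} (Ω : AffDomain r) : Prop :=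
  ∀ q : ℕ, 4 ≤ q → Even q →
    ∃ σ : ℝ → ℤ → ℝ, (∀ j : ℤ, Continuous fun t => σ t j) ∧ (∀ t : ℝ, σ t 0 = t) ∧
      (∀ t : ℝ, ∀ j : ℤ, σ (t + 1) j = σ t j + 1) ∧ ∀ t : ℝ, IsPeriodicOrbit Ω.γ q (σ t)

/-- A `C¹` parametric family `(Ω_τ)_{|τ|≤1}`: `τ ↦ γ(τ,s)` is `C¹` on `[-1,1]` for each `s`. -/
def IsC1Family {r : ℕ} (F : ℝ → AffDomain r) : Prop :=
  ∀ u : ℝ, ContDiffOn ℝ 1 (fun τ => (F τ).γ u) (Set.Icc (-1:ℝ) 1)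

/-- Area-isospectral family: `𝒜(Ω_τ) = 𝒜(Ω_{τ'})` for all `τ, τ' ∈ [-1,1]`. -/
def AreaIsospectral {r : ℕ} (F : ℝ → AffDomain r) : Prop :=
  ∀ τ ∈ Set.Icc (-1:ℝ) 1, ∀ τ' ∈ Set.Icc (-1:ℝ) 1,
    areaSpectrum (F τ) = areaSpectrum (F τ')

/-- The affinity `x ↦ B x + b`. -/
def affMap (B : Matrix (Fin 2) (Fin 2) ℝ) (b : Plane) (x : Plane) : Plane :=
  (WithLp.equiv 2 (Fin 2 → ℝ)).symm (B.mulVec (WithLp.equiv 2 (Fin 2 → ℝ) x)) + b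

/-- Equi-affine family: `Ω_τ = B_τ Ω₀ + b_τ` with `B_τ ∈ SL(2,ℝ)`. -/
def IsEquiAffine {r : ℕ} (F : ℝ → AffDomain r) : Prop :=
  ∃ B : ℝ → Matrix (Fin 2) (Fin 2) ℝ, ∃ b : ℝ → Plane,
    ∀ τ ∈ Set.Icc (-1:ℝ) 1, (B τ).det = 1 ∧
      Set.range (F τ).γ = affMap (B τ) (b τ) '' Set.range (F 0).γ

/-- Reflection across the `x`-axis. -/
def reflX (x : Plane) : Plane := pt (x 0) (-(x 1))

/-- Normalized family of axially symmetric domains: the symmetry axis is the `x`-axis,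
the marked point is `γ(τ,0) = (0,0)` and the auxiliary point is `(2(2π)^{-3/2}, 0)`. -/
def NormalizedAxialFam {r : ℕ} (F : ℝ → AffDomain r) : Prop :=
  ∀ τ ∈ Set.Icc (-1:ℝ) 1,
    (∀ s : ℝ, (F τ).γ (-s) = reflX ((F τ).γ s)) ∧
    (F τ).γ 0 = pt 0 0 ∧
    (F τ).γ (1/2) = pt (2 * (2 * π) ^ (-(3:ℝ)/2)) 0

/-- Normalized family of (centrally symmetric) Radon domains: center of symmetry at the
origin, `γ(τ, s̄_τ) = ((2π)^{-3/2}, 0)`, `γ(τ, s̄_τ + 1/4)` a fixed point on `{y > 0}`,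
where `{s̄_τ, s̄_τ + 1/4, s̄_τ + 1/2, s̄_τ + 3/4}` is a 4-periodic orbit. -/
def NormalizedRadonFam {r : ℕ} (F : ℝ → AffDomain r) : Prop :=
  ∃ sb : ℝ → ℝ, ∃ P : Plane, P 0 = 0 ∧ 0 < P 1 ∧
    ∀ τ ∈ Set.Icc (-1:ℝ) 1,
      (∀ s : ℝ, (F τ).γ (s + 1/2) = -(F τ).γ s) ∧
      (F τ).γ (sb τ) = pt ((2 * π) ^ (-(3:ℝ)/2)) 0 ∧
      (F τ).γ (sb τ + 1/4) = P ∧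
      ∀ j : ℤ, det2 ((F τ).γ (sb τ + (j + 1) / 4) - (F τ).γ (sb τ + (j - 1) / 4))
        (deriv ((F τ).γ) (sb τ + j / 4)) = 0

/-- The infinitesimal deformation function
`n_γ(τ,s) = det (∂_τ γ(τ,s), ∂_s γ(τ,s)/‖∂_s γ(τ,s)‖)` (the `τ`-derivative is taken
within `[-1,1]`). -/
def nFun (γ : ℝ → ℝ → Plane) (τ s : ℝ) : ℝ :=
  det2 (derivWithin (fun t => γ t s) (Set.Icc (-1:ℝ) 1) τ)
    ((‖deriv (γ τ) s‖)⁻¹ • deriv (γ τ) s)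

/-- The canonical parametrization of a family of domains. -/
def famγ {r : ℕ} (F : ℝ → AffDomain r) : ℝ → ℝ → Plane := fun τ u => (F τ).γ u

/-- Axially symmetric `q`-configuration through the marked point:
`0 = s₀ ≤ s₁ ≤ ⋯ ≤ s_{q-1} ≤ 1`, extended by `s_{j+q} = s_j + 1`, with the reflection
symmetry `s_{q-j} = 1 - s_j` (i.e. `s_{q-j} = -s_j` mod 1). -/
def SymCfg (q : ℕ) (s : ℤ → ℝ) : Prop :=
  s 0 = 0 ∧ (∀ j : ℤ, s (j + q) = s j + 1) ∧ (∀ j : ℤ, s j ≤ s (j + 1)) ∧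
    ∀ j : ℤ, s (q - j) = 1 - s j

/-- Centrally symmetric `2k`-configuration: `s_{j+2k} = s_j + 1`, monotone, with the
central symmetry `s_{j+k} = s_j + 1/2`. -/
def CentCfg (k : ℕ) (s : ℤ → ℝ) : Prop :=
  (∀ j : ℤ, s (j + 2 * k) = s j + 1) ∧ (∀ j : ℤ, s j ≤ s (j + 1)) ∧
    ∀ j : ℤ, s (j + k) = s j + 1/2

/-- The four points `γ(a), γ(b), γ(a + 1/2), γ(b + 1/2)` form a 4-periodic closed
trajectory of the symplectic billiard. -/
def IsSquareOrbit (γ : ℝ → Plane) (a b : ℝ) : Prop :=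
  det2 (γ b - γ (b - 1/2)) (deriv γ a) = 0 ∧
  det2 (γ (a + 1/2) - γ a) (deriv γ b) = 0 ∧
  det2 (γ (b + 1/2) - γ b) (deriv γ (a + 1/2)) = 0 ∧
  det2 (γ (a + 1) - γ (a + 1/2)) (deriv γ (b + 1/2)) = 0

/-- A Radon domain: centrally symmetric (centered at the origin) and through every
boundary point there passes a 4-periodic symplectic billiard orbit, with a continuous
next-vertex map `φ` satisfying `s < φ(s) < s + 1/2` and `φ(φ(s)) = s + 1/2`. -/
def IsRadon {r : ℕ} (Ω : AffDomain r) : Prop :=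
  (∀ s : ℝ, Ω.γ (s + 1/2) = -Ω.γ s) ∧
  ∃ φ : ℝ → ℝ, Continuous φ ∧ (∀ s : ℝ, s < φ s ∧ φ s < s + 1/2) ∧
    (∀ s : ℝ, φ (s + 1) = φ s + 1) ∧ (∀ s : ℝ, φ (φ s) = s + 1/2) ∧
    ∀ s : ℝ, IsSquareOrbit Ω.γ s (φ s)

/-- The affine curvature `k = det (γ'', γ''')`. -/
def kAff {r : ℕ} (Ω : AffDomain r) (s : ℝ) : ℝ :=
  det2 (iteratedDeriv 2 Ω.γ s) (iteratedDeriv 3 Ω.γ s)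

/-- The `C²` norm `sup_{[0,1]} (|f| + |f'| + |f''|)` of a 1-periodic function. -/
def C2norm (f : ℝ → ℝ) : ℝ :=
  ⨆ u : Set.Icc (0:ℝ) 1, (|f (u : ℝ)| + |deriv f (u : ℝ)| + |iteratedDeriv 2 f (u : ℝ)|)

/-- The function `β(x) = (1/15)(k(x) - ∫₀¹ k) + (1/3)((2π)² - k(x))`. -/
def betaFn {r : ℕ} (Ω : AffDomain r) (x : ℝ) : ℝ :=
  (1/15) * (kAff Ω x - ∫ u in (0:ℝ)..1, kAff Ω u) +
    (1/3) * ((2 * π) ^ 2 - kAff Ω x)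

/-- The `k`-th Fourier coefficient of a 1-periodic function. -/
def fc (f : ℝ → ℝ) (k : ℤ) : ℂ :=
  ∫ u in (0:ℝ)..1, (f u : ℂ) * Complex.exp (-(2 * (π:ℂ) * Complex.I * k * u))

/-- `ζ(t) = Σ_{n ≥ 1} 1/n^t`. -/
def zetaSum (t : ℕ) : ℝ := ∑' n : ℕ, (1:ℝ) / ((n:ℝ) + 1) ^ t

/-- `Δ_q(τ)`: twice the maximal area (i.e. the maximal action) among axially symmetric
`q`-configurations through the marked point of `Ω_τ`. -/
def Deltaq {r : ℕ} (F : ℝ → AffDomain r) (q : ℕ) (τ : ℝ) : ℝ :=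
  sSup {a : ℝ | ∃ s : ℤ → ℝ, SymCfg q s ∧ a = bAction (F τ).γ q s}

theorem exists_eq_add_half_of_comp_eq_add {f : ℝ → ℝ} (hf : Continuous f) {x c : ℝ}
    (hx : f (f x) = x + c) : ∃ s, f s = s + c / 2 := by
  have hmid : c / 2 ∈ uIcc (f x - x) (f (f x) - f x) := by
    rw [mem_uIcc]
    rcases le_total (f x - x) (f (f x) - f x) with h | h
    · exact Or.inl ⟨by linarith, by linarith⟩
    · exact Or.inr ⟨by linarith, by linarith⟩
  obtain ⟨s, -, hs⟩ :=
    intermediate_value_uIcc (hf.sub continuous_id).continuousOn hmid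
  exact ⟨s, by simp only [Pi.sub_apply, id] at hs; linarith⟩

theorem radon_exists_square_orbit_general {r : ℕ} (Ω : AffDomain r)
    (hΩ : IsRadon Ω) :
    ∃ sb : ℝ, IsSquareOrbit Ω.γ sb (sb + 1/4) := by
  obtain ⟨-, φ, hφ, -, -, hφφ, hsquare⟩ := hΩ
  obtain ⟨s, hs⟩ := exists_eq_add_half_of_comp_eq_add hφ (hφφ 0)
  have hquarter : φ s = s + 1 / 4 := by rw [hs]; norm_num
  exact ⟨s, hquarter ▸ hsquare s⟩

/-- **Proposition.** Every Radon domain `Ω ∈ 𝒟ʳ` admits a parameter `s̄` such that the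
4-periodic symplectic billiard orbit through `γ_Ω(s̄)` has parameters
`{s̄, s̄ + 1/4, s̄ + 1/2, s̄ + 3/4}`. -/
theorem radon_exists_square_orbit {r : ℕ} (hr : 2 ≤ r) (Ω : AffDomain r)
    (hΩ : IsRadon Ω) :
    ∃ sb : ℝ, IsSquareOrbit Ω.γ sb (sb + 1/4) :=
  radon_exists_square_orbit_general Ω hΩ
end
end

section
/- For every integer t ≥ 3 and every integer q ≥ 3, the double sum Σ_{s≥1} Σ_{k≥1, k≠sq} 1/(k^{t−1}·|sq − k|^{t}) is at most (2ζ(t−1)ζ(t)/q^{t−1})·(2^t/q + 2^{t−1} + 1), where ζ is the Riemann zeta function. -/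
noncomputable section

open Real Set MeasureTheory

/-! For each term one of `k` and `|sq - k|` is at least `sq/2`, so
`1/(k^{t-1}|sq-k|^t) ≤ (2/(sq))^{t-1}/|sq-k|^t + (2/(sq))^t/k^{t-1}`. Summed over `k`, the first
part is at most `(2/(sq))^{t-1} · 2ζ(t)`, since every distance `|sq - k|` occurs at most twice,
and the second is `(2/(sq))^t ζ(t-1)`; summing over `s` gives
`(2/q)^{t-1} ζ(t-1) · 2ζ(t) + (2/q)^t ζ(t) ζ(t-1)`, which is below the claimed bound.
The sums are taken in `ℝ≥0∞`, where no summability has to be checked. -/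

open scoped ENNReal

theorem one_div_pow_mul_pow_le {x y S : ℝ} (hx : 0 ≤ x) (hy : 0 ≤ y) (hS : 0 < S)
    (hxy : S ≤ x + y) (m n : ℕ) :
    1 / (x ^ m * y ^ n) ≤ (2 / S) ^ m * (1 / y ^ n) + (2 / S) ^ n * (1 / x ^ m) := by
  have one_div_pow_le {z : ℝ} (hz : S / 2 ≤ z) (k : ℕ) : 1 / z ^ k ≤ (2 / S) ^ k := by
    rw [one_div, ← inv_pow, ← inv_div]
    exact pow_le_pow_left₀ (inv_nonneg.2 (by linarith)) (inv_anti₀ (by positivity) hz) k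
  rw [← one_div_mul_one_div]
  rcases le_total (S / 2) x with hSx | hxS
  · exact le_add_of_le_of_nonneg
      (mul_le_mul_of_nonneg_right (one_div_pow_le hSx m) (by positivity)) (by positivity)
  · rw [mul_comm (1 / x ^ m)]
    exact le_add_of_nonneg_of_le (by positivity)
      (mul_le_mul_of_nonneg_right (one_div_pow_le (by linarith) n) (by positivity))

theorem one_div_pow_mul_abs_sub_pow_le {q : ℕ} (hq : 0 < q) (s k m n : ℕ) :
    1 / (((k : ℝ) + 1) ^ m * |((s : ℝ) + 1) * q - ((k : ℝ) + 1)| ^ n)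
      ≤ (2 / q) ^ m * (1 / ((s : ℝ) + 1) ^ m) * (1 / |((s : ℝ) + 1) * q - ((k : ℝ) + 1)| ^ n)
        + (2 / q) ^ n * (1 / ((s : ℝ) + 1) ^ n) * (1 / ((k : ℝ) + 1) ^ m) := by
  have hsplit (j : ℕ) :
      (2 / (((s : ℝ) + 1) * q)) ^ j = (2 / q) ^ j * (1 / ((s : ℝ) + 1) ^ j) := by
    rw [div_mul_eq_div_div_swap, div_pow, mul_one_div]
  have hS : (0 : ℝ) < ((s : ℝ) + 1) * q := by positivity
  simpa only [hsplit] using one_div_pow_mul_pow_le (x := (k : ℝ) + 1) (by positivity)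
    (abs_nonneg _) hS (by linarith [le_abs_self (((s : ℝ) + 1) * q - ((k : ℝ) + 1))]) m n

theorem zetaSum_nonneg (p : ℕ) : 0 ≤ zetaSum p :=
  tsum_nonneg fun n => by positivity

theorem ENNReal.ofReal_zetaSum {p : ℕ} (hp : 2 ≤ p) :
    ENNReal.ofReal (zetaSum p) = ∑' n : ℕ, ENNReal.ofReal (1 / ((n : ℝ) + 1) ^ p) := by
  refine ENNReal.ofReal_tsum_of_nonneg (fun n => by positivity) ?_
  simpa using (summable_nat_add_iff 1).mpr (Real.summable_one_div_nat_pow.mpr hp)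

-- The term `j = 0` is `1 / 0 = 0`.
theorem tsum_ofReal_one_div_abs_int_pow {p : ℕ} (hp : p ≠ 0) :
    ∑' j : ℤ, ENNReal.ofReal (1 / |(j : ℝ)| ^ p)
      = 2 * ∑' n : ℕ, ENNReal.ofReal (1 / ((n : ℝ) + 1) ^ p) := by
  rw [tsum_of_nat_of_neg_add_one ENNReal.summable ENNReal.summable,
    tsum_eq_zero_add' ENNReal.summable]
  have abs_succ (n : ℕ) : |(((n + 1 : ℕ) : ℤ) : ℝ)| = n + 1 := by
    push_cast; exact abs_of_nonneg (by positivity)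
  have abs_neg_succ (n : ℕ) : |((-(n + 1) : ℤ) : ℝ)| = n + 1 := by
    push_cast; rw [abs_neg]; exact abs_of_nonneg (by positivity)
  simp only [abs_succ, abs_neg_succ, Nat.cast_zero, Int.cast_zero, abs_zero, zero_pow hp,
    div_zero, ENNReal.ofReal_zero, zero_add, two_mul]

theorem tsum_ofReal_one_div_abs_sub_pow_le {p : ℕ} (hp : p ≠ 0) (N : ℤ) :
    ∑' k : ℕ, ENNReal.ofReal (1 / |(N : ℝ) - ((k : ℝ) + 1)| ^ p)
      ≤ 2 * ∑' n : ℕ, ENNReal.ofReal (1 / ((n : ℝ) + 1) ^ p) := by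
  rw [← tsum_ofReal_one_div_abs_int_pow hp]
  have hinj : Function.Injective fun k : ℕ => N - (k + 1) := fun a b h => by simpa using h
  convert ENNReal.tsum_comp_le_tsum_of_injective hinj _ using 3
  push_cast
  ring

theorem ENNReal.tsum_prod_mul_le {α β : Type*} {f : α → ℝ≥0∞} {g : α → β → ℝ≥0∞} {C : ℝ≥0∞}
    (h : ∀ a, ∑' b, g a b ≤ C) : ∑' p : α × β, f p.1 * g p.1 p.2 ≤ (∑' a, f a) * C := by
  rw [ENNReal.tsum_prod', ← ENNReal.tsum_mul_right]
  exact ENNReal.tsum_le_tsum fun a =>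
    ENNReal.tsum_mul_left.trans_le (mul_le_mul' le_rfl (h a))

theorem tsum_ofReal_one_div_pow_mul_abs_sub_pow_le {q : ℕ} (hq : 0 < q) {m n : ℕ}
    (hm : 2 ≤ m) (hn : 2 ≤ n) :
    ∑' p : ℕ × ℕ, ENNReal.ofReal
        (1 / (((p.2 : ℝ) + 1) ^ m * |((p.1 : ℝ) + 1) * q - ((p.2 : ℝ) + 1)| ^ n))
      ≤ ENNReal.ofReal ((2 / q) ^ m * zetaSum m * (2 * zetaSum n)
          + (2 / q) ^ n * zetaSum n * zetaSum m) := by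
  set c : ℕ → ℕ → ℝ≥0∞ := fun j s => ENNReal.ofReal ((2 / q) ^ j * (1 / ((s : ℝ) + 1) ^ j))
  set d : ℕ → ℕ → ℝ≥0∞ := fun s k =>
    ENNReal.ofReal (1 / |((s : ℝ) + 1) * q - ((k : ℝ) + 1)| ^ n)
  set u : ℕ → ℝ≥0∞ := fun k => ENNReal.ofReal (1 / ((k : ℝ) + 1) ^ m)
  have hsum_c (j : ℕ) (hj : 2 ≤ j) :
      ∑' s, c j s = ENNReal.ofReal ((2 / q) ^ j * zetaSum j) := by
    simp_rw [c, ENNReal.ofReal_mul (by positivity : (0 : ℝ) ≤ (2 / q) ^ j),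
      ENNReal.tsum_mul_left, ENNReal.ofReal_zetaSum hj]
  have hsum_d (s : ℕ) : ∑' k, d s k ≤ ENNReal.ofReal (2 * zetaSum n) := by
    rw [ENNReal.ofReal_mul zero_le_two, ENNReal.ofReal_ofNat, ENNReal.ofReal_zetaSum hn]
    convert tsum_ofReal_one_div_abs_sub_pow_le (p := n) (by omega) ((s + 1) * q) using 4
    push_cast
    rfl
  have := zetaSum_nonneg m
  have := zetaSum_nonneg n
  calc _ ≤ ∑' p : ℕ × ℕ, (c m p.1 * d p.1 p.2 + c n p.1 * u p.2) :=
        ENNReal.tsum_le_tsum fun p => by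
          rw [← ENNReal.ofReal_mul (by positivity), ← ENNReal.ofReal_mul (by positivity),
            ← ENNReal.ofReal_add (by positivity) (by positivity)]
          exact ENNReal.ofReal_le_ofReal (one_div_pow_mul_abs_sub_pow_le hq p.1 p.2 m n)
    _ = _ := ENNReal.tsum_add
    _ ≤ (∑' s, c m s) * ENNReal.ofReal (2 * zetaSum n)
          + (∑' s, c n s) * ENNReal.ofReal (zetaSum m) :=
        add_le_add (ENNReal.tsum_prod_mul_le hsum_d)
          (ENNReal.tsum_prod_mul_le (g := fun _ => u) fun _ => (ENNReal.ofReal_zetaSum hm).ge)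
    _ = _ := by
        rw [hsum_c m hm, hsum_c n hn, ← ENNReal.ofReal_mul (by positivity),
          ← ENNReal.ofReal_mul (by positivity),
          ← ENNReal.ofReal_add (by positivity) (by positivity)]

theorem tsum_le_of_tsum_ofReal_le {α : Type*} {f : α → ℝ} {C : ℝ} (hf : ∀ a, 0 ≤ f a)
    (hC : 0 ≤ C) (h : ∑' a, ENNReal.ofReal (f a) ≤ ENNReal.ofReal C) : ∑' a, f a ≤ C := by
  have := ENNReal.toReal_le_of_le_ofReal hC h
  rwa [ENNReal.tsum_toReal_eq fun _ => ENNReal.ofReal_ne_top,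
    tsum_congr fun a => ENNReal.toReal_ofReal (hf a)] at this

/-- **Lemma (double-sum estimate).** For integers `t ≥ 3` and `q ≥ 3`,
`Σ_{s≥1} Σ_{k≥1, k≠sq} 1/(k^{t-1}|sq-k|^t) ≤ (2ζ(t-1)ζ(t)/q^{t-1})(2^t/q + 2^{t-1} + 1)`. -/
theorem double_sum_estimate (t q : ℕ) (ht : 3 ≤ t) (hq : 3 ≤ q) :
    (∑' p : ℕ × ℕ,
        if (p.2 + 1) ≠ (p.1 + 1) * q then
          (1:ℝ) / (((p.2:ℝ) + 1) ^ (t - 1) * |((p.1:ℝ) + 1) * q - ((p.2:ℝ) + 1)| ^ t)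
        else 0) ≤
      (2 * zetaSum (t - 1) * zetaSum t / (q:ℝ) ^ (t - 1)) *
        ((2:ℝ) ^ t / q + (2:ℝ) ^ (t - 1) + 1) := by
  obtain ⟨m, rfl⟩ : ∃ m, t = m + 1 := ⟨t - 1, by omega⟩
  rw [Nat.add_sub_cancel]
  have hq' : (q : ℝ) ≠ 0 := by positivity
  have hζm := zetaSum_nonneg m
  have hζn := zetaSum_nonneg (m + 1)
  have hgap :
      (2 * zetaSum m * zetaSum (m + 1) / (q : ℝ) ^ m) * ((2 : ℝ) ^ (m + 1) / q + 2 ^ m + 1)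
      - ((2 / q) ^ m * zetaSum m * (2 * zetaSum (m + 1))
        + (2 / q) ^ (m + 1) * zetaSum (m + 1) * zetaSum m)
      = zetaSum m * zetaSum (m + 1) * (2 ^ (m + 1) / (q : ℝ) ^ (m + 1) + 2 / (q : ℝ) ^ m) := by
    rw [div_pow, div_pow]
    field_simp
    ring
  refine tsum_le_of_tsum_ofReal_le (fun p => by split_ifs <;> positivity) (by positivity) ?_
  calc _ ≤ _ := ENNReal.tsum_le_tsum fun p => ENNReal.ofReal_le_ofReal
          ((ite_le_sup _ _ _).trans (sup_le le_rfl (by positivity)))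
    _ ≤ _ := tsum_ofReal_one_div_pow_mul_abs_sub_pow_le (by omega) (by omega) (by omega)
    _ ≤ _ := ENNReal.ofReal_le_ofReal (sub_nonneg.1 (hgap ▸ by positivity))
end
end

section
/- There exists a constant c₀ ∈ (0, 1) with the following property: if (a_k)_{k≥1} is a sequence of complex numbers with M := sup_{k≥1} |a_k|·k⁴ < ∞, such that |a_q| ≤ c₀·M/q⁴ for every q ≥ 3, and such that Σ_{k≥1} a_k = 0 and Σ_{k≥1} a_{2k} = 0 (both series converging absolutely), then a_k = 0 for all k ≥ 1. -/
noncomputable section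

open Real Set MeasureTheory

/-! The bound `|a_q| q⁴ ≤ c₀ M`, assumed for `q ≥ 3`, propagates to `q = 2` through
`a₂ = -Σ_{k≥2} a_{2k}` and then to `q = 1` through `a₁ = -Σ_{k≥2} a_k`: in both cases the tail
costs a factor `Σ_{k≥2} k⁻⁴ = ζ(4) - 1 < 1`. Hence `M ≤ c₀ M`, which forces `M = 0` for any
`c₀ < 1`. -/

theorem hasSum_one_div_nat_add_two_pow_four :
    HasSum (fun k : ℕ => 1 / ((k : ℝ) + 2) ^ 4) (π ^ 4 / 90 - 1) := by
  have h := (hasSum_nat_add_iff' 2).mpr hasSum_zeta_four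
  -- the `i = 0` term is `1 / 0 = 0`
  have hhead : ∑ i ∈ Finset.range 2, (1 : ℝ) / (i : ℝ) ^ 4 = 1 := by
    norm_num [Finset.sum_range_succ]
  rw [hhead] at h
  exact_mod_cast h

theorem pi_pow_four_div_ninety_sub_one_le_one : π ^ 4 / 90 - 1 ≤ 1 := by
  have hπ : π ^ 4 ≤ 3.15 ^ 4 := pow_le_pow_left₀ pi_pos.le pi_lt_d2.le 4
  norm_num at hπ ⊢
  linarith

theorem norm_le_of_tsum_eq_zero_of_le_div_pow_four {E : Type*} [NormedAddCommGroup E]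
    [CompleteSpace E] {f : ℕ → E} {C : ℝ} (hf : Summable fun k => ‖f (k + 1)‖)
    (hsum : ∑' k, f (k + 1) = 0) (hdecay : ∀ k, 2 ≤ k → ‖f k‖ ≤ C / (k : ℝ) ^ 4) :
    ‖f 1‖ ≤ C := by
  have hC : 0 ≤ C := by
    have := (norm_nonneg _).trans (hdecay 2 le_rfl)
    norm_num at this
    linarith
  have htail : Summable fun k => ‖f (k + 2)‖ := (summable_nat_add_iff 1).mpr hf
  have hf1 : f 1 = -∑' k, f (k + 2) := by
    rw [hf.of_norm.tsum_eq_zero_add] at hsum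
    exact eq_neg_of_add_eq_zero_left hsum
  have hterm : ∀ k : ℕ, ‖f (k + 2)‖ ≤ C * (1 / ((k : ℝ) + 2) ^ 4) := fun k => by
    have := hdecay (k + 2) (by omega)
    push_cast at this
    rwa [mul_one_div]
  calc ‖f 1‖ = ‖∑' k, f (k + 2)‖ := by rw [hf1, norm_neg]
    _ ≤ ∑' k, ‖f (k + 2)‖ := norm_tsum_le_tsum_norm htail
    _ ≤ ∑' k : ℕ, C * (1 / ((k : ℝ) + 2) ^ 4) :=
      htail.tsum_le_tsum hterm (hasSum_one_div_nat_add_two_pow_four.summable.mul_left C)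
    _ = C * (π ^ 4 / 90 - 1) := by rw [tsum_mul_left, hasSum_one_div_nat_add_two_pow_four.tsum_eq]
    _ ≤ C := mul_le_of_le_one_right hC pi_pow_four_div_ninety_sub_one_le_one

theorem eq_zero_of_le_mul_ciSup {ι : Type*} {b : ι → ℝ} {c : ℝ} (hb : BddAbove (Set.range b))
    (hnonneg : ∀ i, 0 ≤ b i) (hc : c < 1) (hle : ∀ i, b i ≤ c * ⨆ i, b i) (i : ι) :
    b i = 0 := by
  have : Nonempty ι := ⟨i⟩
  have hM : (⨆ i, b i) ≤ c * ⨆ i, b i := ciSup_le hle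
  have hM0 : 0 ≤ ⨆ i, b i := Real.iSup_nonneg hnonneg
  have := le_ciSup hb i
  nlinarith [hnonneg i]

theorem norm_le_div_pow_four_of_tsum_eq_zero {E : Type*} [NormedAddCommGroup E]
    [CompleteSpace E] {a : ℕ → E} {C : ℝ} (hs : Summable fun k => ‖a (k + 1)‖)
    (hs₂ : Summable fun k => ‖a (2 * (k + 1))‖) (hsum : ∑' k, a (k + 1) = 0)
    (hsum₂ : ∑' k, a (2 * (k + 1)) = 0) (hdecay : ∀ q, 3 ≤ q → ‖a q‖ ≤ C / (q : ℝ) ^ 4)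
    {q : ℕ} (hq : 1 ≤ q) : ‖a q‖ ≤ C / (q : ℝ) ^ 4 := by
  have ha₂ : ‖a 2‖ ≤ C / 2 ^ 4 := by
    have := norm_le_of_tsum_eq_zero_of_le_div_pow_four (f := fun k => a (2 * k)) (C := C / 2 ^ 4)
      hs₂ hsum₂ fun k hk => by
        have := hdecay (2 * k) (by omega)
        rwa [Nat.cast_mul, mul_pow, ← div_div, Nat.cast_ofNat] at this
    simpa using this
  have hdecay₂ : ∀ q : ℕ, 2 ≤ q → ‖a q‖ ≤ C / (q : ℝ) ^ 4 := fun q hq₂ => by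
    rcases hq₂.eq_or_lt with rfl | hq₃
    · exact_mod_cast ha₂
    · exact hdecay q hq₃
  rcases hq.eq_or_lt with rfl | hq₂
  · simpa using norm_le_of_tsum_eq_zero_of_le_div_pow_four hs hsum hdecay₂
  · exact hdecay₂ q hq₂

/-- **Lemma (vanishing of Fourier coefficients).** There is `c₀ ∈ (0,1)` such that any
sequence `(a_k)_{k≥1}` of complex numbers with `M := sup_k |a_k| k⁴ < ∞`,
`|a_q| ≤ c₀ M/q⁴` for all `q ≥ 3`, and `Σ_{k≥1} a_k = 0 = Σ_{k≥1} a_{2k}` (absolutely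
convergent), vanishes identically. -/
theorem coefficients_vanish :
    ∃ c₀ : ℝ, 0 < c₀ ∧ c₀ < 1 ∧
      ∀ a : ℕ → ℂ,
        BddAbove (Set.range fun k : ℕ => ‖a (k + 1)‖ * ((k:ℝ) + 1) ^ 4) →
        (∀ q : ℕ, 3 ≤ q →
          ‖a q‖ ≤
            c₀ * (⨆ k : ℕ, ‖a (k + 1)‖ * ((k:ℝ) + 1) ^ 4) / (q:ℝ) ^ 4) →
        Summable (fun k : ℕ => ‖a (k + 1)‖) →
        Summable (fun k : ℕ => ‖a (2 * (k + 1))‖) →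
        (∑' k : ℕ, a (k + 1)) = 0 →
        (∑' k : ℕ, a (2 * (k + 1))) = 0 →
        ∀ k : ℕ, 1 ≤ k → a k = 0 := by
  refine ⟨1 / 2, by norm_num, by norm_num, fun a hbdd hq hs hs₂ hsum hsum₂ k hk => ?_⟩
  obtain ⟨n, rfl⟩ : ∃ n, k = n + 1 := ⟨k - 1, by omega⟩
  have hb := eq_zero_of_le_mul_ciSup hbdd (fun _ => by positivity) (by norm_num : (1 / 2 : ℝ) < 1)
    (fun m => by
      have := norm_le_div_pow_four_of_tsum_eq_zero hs hs₂ hsum hsum₂ hq (Nat.le_add_left 1 m)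
      push_cast at this
      rwa [le_div_iff₀ (by positivity)] at this) n
  rw [mul_eq_zero, norm_eq_zero] at hb
  exact hb.resolve_right (by positivity)
end
end

section
/- Let n : ℝ → ℝ be a continuous 1-periodic even function with zero average and absolutely convergent Fourier series, i.e. n(s) = Σ_{|k|≥1} n̂_k e^{2πiks} with Σ|n̂_k| < ∞ and n̂_k = n̂_{−k}. If Σ_{j=0}^{q−1} n(j/q) = 0 for every integer q ≥ 3, and n(0) = 0 and n(1/2) = 0, then n ≡ 0. -/
noncomputable section

open Real Set MeasureTheory

/-! The hypotheses force `Σ_m c(qm) = 0` for every `q ≥ 1`, by summing the Fourier series over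
the `q`-th roots of unity. A sieve over the primes below `P` then gives
`Σ_{m coprime to all p < P} c(km) = 0`, and as `P → ∞` the only surviving terms are
`m = ±1` (dominated convergence), so `c k + c (-k) = 0`. The finite sieve replaces Möbius
inversion, which would need `Σ_N d(N) |c_N| < ∞` rather than `Σ_N |c_N| < ∞`. -/

open Filter Topology

lemma sum_range_exp_two_pi_I_mul_div (q : ℕ) (hq : q ≠ 0) (k : ℤ) :
    ∑ j ∈ Finset.range q, Complex.exp (2 * (π:ℂ) * Complex.I * k * (((j:ℝ) / q : ℝ) : ℂ)) =
      if (q:ℤ) ∣ k then (q:ℂ) else 0 := by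
  have hζ := Complex.isPrimitiveRoot_exp q hq
  set ζ := Complex.exp (2 * π * Complex.I / q)
  have hpow : ∀ j : ℕ, Complex.exp (2 * (π:ℂ) * Complex.I * k * (((j:ℝ) / q : ℝ) : ℂ)) =
      (ζ ^ k) ^ j := by
    intro j
    rw [← Complex.exp_int_mul, ← Complex.exp_nat_mul]
    congr 1
    push_cast
    field_simp
  simp_rw [hpow]
  split_ifs with hdvd
  · simp [(hζ.zpow_eq_one_iff_dvd k).2 hdvd]
  · have hne : ζ ^ k ≠ 1 := mt (hζ.zpow_eq_one_iff_dvd k).1 hdvd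
    have hroot : (ζ ^ k) ^ q = 1 := by
      rw [← zpow_natCast, ← zpow_mul, mul_comm, zpow_mul, zpow_natCast, hζ.pow_eq_one, one_zpow]
    rw [geom_sum_eq hne, hroot, sub_self, zero_div]

lemma tsum_indicator_dvd {E : Type*} [AddCommMonoid E] [TopologicalSpace E] (f : ℤ → E) {d : ℤ}
    (hd : d ≠ 0) : ∑' m, {m | d ∣ m}.indicator f m = ∑' m, f (d * m) := by
  have hrange : {m | d ∣ m} = Set.range (d * ·) := by
    ext m
    simp [dvd_def, eq_comm]
  rw [hrange, ← tsum_subtype, tsum_range f (mul_right_injective₀ hd)]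

lemma summable_fourier_term {c : ℤ → ℂ} (hc : Summable (‖c ·‖)) (s : ℝ) :
    Summable fun k : ℤ => c k * Complex.exp (2 * (π:ℂ) * Complex.I * k * s) := by
  refine Summable.of_norm_bounded hc fun k => le_of_eq ?_
  rw [norm_mul, show 2 * (π:ℂ) * Complex.I * k * s = ((2 * π * k * s : ℝ) : ℂ) * Complex.I by
    push_cast; ring, Complex.norm_exp_ofReal_mul_I, mul_one]

lemma sum_range_fourier_series_div (c : ℤ → ℂ) (hc : Summable (‖c ·‖)) (q : ℕ) (hq : q ≠ 0) :
    ∑ j ∈ Finset.range q, ∑' k : ℤ,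
        c k * Complex.exp (2 * (π:ℂ) * Complex.I * k * (((j:ℝ) / q : ℝ) : ℂ)) =
      q * ∑' m : ℤ, c (q * m) := by
  rw [← Summable.tsum_finsetSum fun j _ => summable_fourier_term hc _,
    ← tsum_indicator_dvd _ (Int.natCast_ne_zero.2 hq), ← tsum_mul_left]
  refine tsum_congr fun k => ?_
  rw [← Finset.mul_sum, sum_range_exp_two_pi_I_mul_div q hq, Set.indicator_apply]
  split_ifs <;> simp_all [mul_comm]

lemma tsum_indicator_forall_not_dvd_eq_zero {E : Type*} [NormedAddCommGroup E] [CompleteSpace E]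
    (s : Finset ℕ) (hs : ∀ p ∈ s, p.Prime) {f : ℤ → E} (hf : Summable f)
    (h : ∀ d : ℕ, d ≠ 0 → ∑' m, f (d * m) = 0) :
    ∑' m, {m : ℤ | ∀ p ∈ s, ¬ (p:ℤ) ∣ m}.indicator f m = 0 := by
  induction s using Finset.induction_on generalizing f with
  | empty => simpa using h 1 one_ne_zero
  | @insert p s hps ih =>
    have hp : p.Prime := hs p (Finset.mem_insert_self p s)
    have hp0 : (p:ℤ) ≠ 0 := Int.natCast_ne_zero.2 hp.ne_zero
    replace hs : ∀ q ∈ s, q.Prime := fun q hq => hs q (Finset.mem_insert_of_mem hq)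
    set A := {m : ℤ | ∀ q ∈ s, ¬ (q:ℤ) ∣ m}
    have hA : Summable (A.indicator f) := hf.indicator A
    -- a prime `q ≠ p` divides `p * m` iff it divides `m`
    have hmul : ∀ m : ℤ, A.indicator f (p * m) = A.indicator (fun m => f (p * m)) m := by
      intro m
      simp only [A, Set.indicator_apply]
      refine if_congr (forall₂_congr fun q hq => not_congr ⟨fun hdvd => ?_, (·.mul_left _)⟩)
        rfl rfl
      refine (Int.Prime.dvd_mul' (hs q hq) hdvd).resolve_left fun hqp => hps ?_
      rwa [← (Nat.prime_dvd_prime_iff_eq (hs q hq) hp).1 (Int.natCast_dvd_natCast.1 hqp)]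
    calc ∑' m, {m : ℤ | ∀ q ∈ insert p s, ¬ (q:ℤ) ∣ m}.indicator f m
        = ∑' m, (A.indicator f m - {m | (p:ℤ) ∣ m}.indicator (A.indicator f) m) := by
          refine tsum_congr fun m => ?_
          by_cases hpm : (p:ℤ) ∣ m <;> simp [A, Set.indicator_apply, hpm]
      _ = ∑' m, A.indicator f m - ∑' m, A.indicator (fun m => f (p * m)) m := by
          rw [hA.tsum_sub (hA.indicator _), tsum_indicator_dvd _ hp0, tsum_congr hmul]
      _ = 0 := by
          have hfp : Summable fun m => f (p * m) := hf.comp_injective (mul_right_injective₀ hp0)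
          rw [ih hs hf h, ih hs hfp fun d hd => ?_, sub_zero]
          simpa [mul_left_comm, ← mul_assoc] using h (p * d) (mul_ne_zero hp.ne_zero hd)

lemma eventually_forall_mem_primesBelow_not_dvd_iff (m : ℤ) :
    ∀ᶠ P in atTop, (∀ p ∈ Nat.primesBelow P, ¬ (p:ℤ) ∣ m) ↔ m.natAbs = 1 := by
  filter_upwards [eventually_gt_atTop m.natAbs.minFac] with P hP
  constructor
  · intro hcoprime
    by_contra hm
    exact hcoprime _ (Nat.mem_primesBelow.2 ⟨hP, Nat.minFac_prime hm⟩)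
      (Int.natCast_dvd.2 (Nat.minFac_dvd _))
  · intro hm p hp hdvd
    rw [Int.natCast_dvd, hm, Nat.dvd_one] at hdvd
    exact (Nat.mem_primesBelow.1 hp).2.ne_one hdvd

lemma apply_one_add_apply_neg_one_eq_zero {E : Type*} [NormedAddCommGroup E] [CompleteSpace E]
    {f : ℤ → E} (hf : Summable (‖f ·‖)) (h : ∀ d : ℕ, d ≠ 0 → ∑' m, f (d * m) = 0) :
    f 1 + f (-1) = 0 := by
  have hlim : Tendsto (fun P => ∑' m, {m : ℤ | ∀ p ∈ Nat.primesBelow P, ¬ (p:ℤ) ∣ m}.indicator f m)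
      atTop (𝓝 (∑' m, {m : ℤ | m.natAbs = 1}.indicator f m)) := by
    refine tendsto_tsum_of_dominated_convergence hf (fun m => tendsto_const_nhds.congr' ?_)
      (Eventually.of_forall fun P m => norm_indicator_le_norm_self _ _)
    filter_upwards [eventually_forall_mem_primesBelow_not_dvd_iff m] with P hP
    simp only [Set.indicator_apply, Set.mem_ofPred_eq, hP]
  have hsieve : ∀ P, ∑' m, {m : ℤ | ∀ p ∈ Nat.primesBelow P, ¬ (p:ℤ) ∣ m}.indicator f m = 0 :=
    fun P => tsum_indicator_forall_not_dvd_eq_zero _ (fun p hp => (Nat.mem_primesBelow.1 hp).2)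
      hf.of_norm h
  have hunits : ∑' m, {m : ℤ | m.natAbs = 1}.indicator f m = f 1 + f (-1) := by
    rw [tsum_eq_sum (s := {1, -1}), Finset.sum_pair (by decide)]
    · simp
    · intro m hm
      rw [Set.indicator_of_notMem]
      simpa [Int.natAbs_eq_iff, or_comm] using hm
  simp only [hsieve] at hlim
  rw [← hunits]
  exact tendsto_nhds_unique hlim tendsto_const_nhds

lemma eq_zero_of_forall_tsum_mul_eq_zero {E : Type*} [NormedAddCommGroup E] [NormedSpace ℝ E]
    [CompleteSpace E] {c : ℤ → E} (hc : Summable (‖c ·‖)) (hc0 : c 0 = 0)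
    (hsymm : ∀ k, c (-k) = c k) (h : ∀ d : ℕ, d ≠ 0 → ∑' m, c (d * m) = 0) (k : ℤ) :
    c k = 0 := by
  have habs : c k = c k.natAbs := by
    rcases Int.natAbs_eq k with hk | hk <;> nth_rw 1 [hk]
    exact hsymm _
  obtain hk | hk := eq_or_ne k.natAbs 0
  · rwa [habs, hk]
  have hk' : (k.natAbs : ℤ) ≠ 0 := Int.natCast_ne_zero.2 hk
  have hpair := apply_one_add_apply_neg_one_eq_zero (f := fun m => c (k.natAbs * m))
    (hc.comp_injective (mul_right_injective₀ hk')) fun d hd => by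
      simpa [← mul_assoc] using h (k.natAbs * d) (mul_ne_zero hk hd)
  simp only [mul_one, mul_neg, hsymm, ← two_smul ℝ] at hpair
  rw [habs]
  exact (smul_eq_zero.1 hpair).resolve_left two_ne_zero

theorem circle_case_vanishing_general (n : ℝ → ℝ) (c : ℤ → ℂ)
    (hsum : Summable fun k : ℤ => ‖c k‖)
    (hc0 : c 0 = 0) (hcsymm : ∀ k : ℤ, c (-k) = c k)
    (hrep : ∀ s : ℝ, (n s : ℂ) = ∑' k : ℤ, c k * Complex.exp (2 * (π:ℂ) * Complex.I * k * s))
    (hvanish : ∀ q : ℕ, 3 ≤ q → ∑ j ∈ Finset.range q, n ((j:ℝ) / q) = 0)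
    (h0 : n 0 = 0) (hhalf : n (1/2) = 0) :
    ∀ s : ℝ, n s = 0 := by
  have hsample : ∀ q : ℕ, q ≠ 0 → ∑ j ∈ Finset.range q, n ((j:ℝ) / q) = 0
    | 1, _ => by simpa using h0
    | 2, _ => by norm_num [Finset.sum_range_succ, h0, hhalf]
    | q + 3, _ => hvanish _ (by omega)
  have hmultiples : ∀ q : ℕ, q ≠ 0 → ∑' m, c (q * m) = 0 := by
    intro q hq
    have hfourier := sum_range_fourier_series_div c hsum q hq
    simp_rw [← hrep, ← Complex.ofReal_sum, hsample q hq, Complex.ofReal_zero] at hfourier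
    exact (mul_eq_zero.1 hfourier.symm).resolve_left (Nat.cast_ne_zero.2 hq)
  intro s
  have hs := hrep s
  simp only [eq_zero_of_forall_tsum_mul_eq_zero hsum hc0 hcsymm hmultiples, zero_mul,
    tsum_zero] at hs
  exact_mod_cast hs

/-- **Remark (the circle case).** A continuous, 1-periodic, even, zero-average function
with absolutely convergent Fourier series, vanishing at `0` and `1/2` and with
`Σ_{j=0}^{q-1} n(j/q) = 0` for every `q ≥ 3`, vanishes identically. -/
theorem circle_case_vanishing (n : ℝ → ℝ) (c : ℤ → ℂ)
    (hcont : Continuous n) (hper : Function.Periodic n 1)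
    (heven : ∀ s : ℝ, n (-s) = n s)
    (havg : (∫ x in (0:ℝ)..1, n x) = 0)
    (hsum : Summable fun k : ℤ => ‖c k‖)
    (hc0 : c 0 = 0) (hcsymm : ∀ k : ℤ, c (-k) = c k)
    (hrep : ∀ s : ℝ, (n s : ℂ) = ∑' k : ℤ, c k * Complex.exp (2 * (π:ℂ) * Complex.I * k * s))
    (hvanish : ∀ q : ℕ, 3 ≤ q → ∑ j ∈ Finset.range q, n ((j:ℝ) / q) = 0)
    (h0 : n 0 = 0) (hhalf : n (1/2) = 0) :
    ∀ s : ℝ, n s = 0 :=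
  circle_case_vanishing_general n c hsum hc0 hcsymm hrep hvanish h0 hhalf
end
end
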